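/- Let X be a real Banach space, (x_n) a bounded sequence in X which is weakly null (for every continuous linear functional f : X → ℝ, f(x_n) → 0), and w : ℕ → [0,∞) with Σ_n w n = ∞ and w n → 0. Then for every ε > 0 there exists a finite set G ⊆ ℕ with Σ_{j∈G} w j > 0 such that ‖Σ_{i∈G} (w i / Σ_{j∈G} w j) • x_i‖ < ε. -/

import Mathlib

open Filter Topology


lemma greedy_lemma (w : ℕ → ℝ) (hwnn : ∀ n, 0 ≤ w n) (hwdiv : ¬ Summable w)
    (hw0 : Tendsto w atTop (𝓝 0)) (N : ℕ) (a γ : ℝ) (ha : 0 < a) (hγ : 0 < γ) :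
    ∃ G : Finset ℕ, (∀ i ∈ G, N ≤ i) ∧ a ≤ ∑ i ∈ G, w i ∧ ∑ i ∈ G, w i ≤ a + γ := by
  obtain ⟨N₁, hN₁⟩ : ∃ N₁, ∀ i ≥ N₁, w i < γ := by
    have h := hw0.eventually (gt_mem_nhds hγ)
    exact eventually_atTop.1 h
  set M := max N N₁ with hM
  have hdiv' : ¬ Summable (fun k => w (k + M)) := by
    intro h
    exact hwdiv ((summable_nat_add_iff M).1 h)
  have htend := (not_summable_iff_tendsto_nat_atTop_of_nonneg (fun n => hwnn _)).1 hdiv'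
  set S : ℕ → ℝ := fun n => ∑ i ∈ Finset.range n, w (i + M) with hS
  have hex : ∃ n, a ≤ S n := by
    rcases (tendsto_atTop.1 htend a).exists with ⟨n, hn⟩
    exact ⟨n, hn⟩
  classical
  have hn₀a : a ≤ S (Nat.find hex) := Nat.find_spec hex
  have hn₀ne : Nat.find hex ≠ 0 := by
    intro h
    rw [h] at hn₀a
    simp only [hS, Finset.range_zero, Finset.sum_empty] at hn₀a
    linarith
  obtain ⟨n₁, heq⟩ : ∃ n₁, Nat.find hex = n₁ + 1 :=
    ⟨Nat.find hex - 1, (Nat.succ_pred_eq_of_pos (Nat.pos_of_ne_zero hn₀ne)).symm⟩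
  rw [heq] at hn₀a
  have hprev : S n₁ < a := by
    by_contra h
    have := Nat.find_min hex (m := n₁) (by omega)
    exact this (le_of_not_gt h)
  have hstep : S (n₁ + 1) = S n₁ + w (n₁ + M) := by
    simp [hS, Finset.sum_range_succ]
  refine ⟨(Finset.range (n₁ + 1)).image (· + M), ?_, ?_, ?_⟩
  · intro i hi
    simp only [Finset.mem_image] at hi
    obtain ⟨k, _, rfl⟩ := hi
    exact le_trans (le_max_left _ _) (Nat.le_add_left M k)
  · rw [Finset.sum_image (by intro a _ b _ h; simp only at h; omega)]
    exact hn₀a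
  · rw [Finset.sum_image (by intro a _ b _ h; simp only at h; omega)]
    have hw' : w (n₁ + M) < γ := hN₁ _ (le_trans (le_max_right _ _) (Nat.le_add_left M n₁))
    show S (n₁ + 1) ≤ a + γ
    rw [hstep]
    linarith


lemma wf_ext (𝓕 : Set (Finset ℕ)) (h0 : ∅ ∈ 𝓕)
    (hered : ∀ F F' : Finset ℕ, F' ⊆ F → F ∈ 𝓕 → F' ∈ 𝓕)
    (hnochain : ¬ ∃ φ : ℕ → ℕ, StrictMono φ ∧ ∀ k : ℕ, (Finset.range k).image φ ∈ 𝓕) :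
    WellFounded (fun S' S : Finset ℕ => S' ∈ 𝓕 ∧ ∃ i, (∀ j ∈ S, j < i) ∧ S' = insert i S) := by
  set r : Finset ℕ → Finset ℕ → Prop :=
    fun S' S => S' ∈ 𝓕 ∧ ∃ i, (∀ j ∈ S, j < i) ∧ S' = insert i S with hr
  by_contra hwf
  classical
  have hx0 : ∃ x, ¬ Acc r x := by
    by_contra h
    push_neg at h
    exact hwf ⟨h⟩
  have key : ∀ x, ¬ Acc r x → ∃ y, r y x ∧ ¬ Acc r y := by
    intro x hx
    by_contra h
    push_neg at h
    exact hx (Acc.intro x (fun y hy => h y hy))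
  obtain ⟨x0, hx0acc⟩ := hx0
  let g : {S : Finset ℕ // ¬ Acc r S} → {S : Finset ℕ // ¬ Acc r S} :=
    fun p => ⟨Classical.choose (key p.1 p.2), (Classical.choose_spec (key p.1 p.2)).2⟩
  have hg : ∀ p, r (g p).1 p.1 := fun p => (Classical.choose_spec (key p.1 p.2)).1
  let fs : ℕ → {S : Finset ℕ // ¬ Acc r S} := fun n => g^[n] ⟨x0, hx0acc⟩
  let f : ℕ → Finset ℕ := fun n => (fs n).1
  have hstep : ∀ n : ℕ, r (f (n + 1)) (f n) := by
    intro n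
    have : fs (n + 1) = g (fs n) := Function.iterate_succ_apply' g n _
    show r (fs (n+1)).1 (fs n).1
    rw [this]
    exact hg (fs n)
  choose hmem i hlt heq using hstep
  apply hnochain
  refine ⟨i, ?_, ?_⟩
  · apply strictMono_nat_of_lt_succ
    intro n
    apply hlt (n + 1)
    rw [heq n]
    exact Finset.mem_insert_self _ _
  · have hsub : ∀ k : ℕ, (Finset.range k).image i ⊆ f k := by
      intro k
      induction k with
      | zero => simp
      | succ k ih =>
        rw [Finset.range_add_one, Finset.image_insert, heq k]
        intro j hj
        rcases Finset.mem_insert.1 hj with h | h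
        · rw [h]; exact Finset.mem_insert_self _ _
        · exact Finset.mem_insert_of_mem (ih h)
    intro k
    cases k with
    | zero => simpa using h0
    | succ k => exact hered _ _ (hsub (k+1)) (hmem k)

set_option maxHeartbeats 1000000 in
lemma mainCombo (w : ℕ → ℝ) (hwnn : ∀ n, 0 ≤ w n) (hwdiv : ¬ Summable w)
    (hw0 : Tendsto w atTop (𝓝 0)) (𝓕 : Set (Finset ℕ)) (h0 : ∅ ∈ 𝓕)
    (hered : ∀ F F' : Finset ℕ, F' ⊆ F → F ∈ 𝓕 → F' ∈ 𝓕)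
    (hnochain : ¬ ∃ φ : ℕ → ℕ, StrictMono φ ∧ ∀ k : ℕ, (Finset.range k).image φ ∈ 𝓕)
    (θ : ℝ) (hθ : 0 < θ) :
    ∃ G : Finset ℕ, 0 < ∑ i ∈ G, w i ∧
      ∀ F : Finset ℕ, F ⊆ G → F ∈ 𝓕 → ∑ i ∈ F, w i ≤ θ * ∑ i ∈ G, w i := by
  classical
  have hwf : WellFounded (fun S' S : Finset ℕ => S' ∈ 𝓕 ∧ ∃ i, (∀ j ∈ S, j < i) ∧ S' = insert i S) :=
    wf_ext 𝓕 h0 hered hnochain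
  set r : Finset ℕ → Finset ℕ → Prop :=
    fun S' S => S' ∈ 𝓕 ∧ ∃ i, (∀ j ∈ S, j < i) ∧ S' = insert i S with hrdef
  have cert : ∀ o : Ordinal, ∀ 𝒮 : Finset (Finset ℕ), (∀ S ∈ 𝒮, (hwf.apply S).rank < o) →
      ∀ θ' M γ : ℝ, ∀ N : ℕ, 0 < θ' → 0 < M → 0 < γ → γ ≤ θ' * M / 8 →
      (∀ S ∈ 𝒮, ∀ j ∈ S, j < N) →
      ∃ G : Finset ℕ, (∀ i ∈ G, N ≤ i) ∧ M ≤ ∑ i ∈ G, w i ∧ ∑ i ∈ G, w i ≤ M + γ ∧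
        ∀ S ∈ 𝒮, ∀ F : Finset ℕ, F ⊆ G → (S ∪ F) ∈ 𝓕 →
          ∑ i ∈ F, w i ≤ θ' * ∑ i ∈ G, w i := by
    intro o
    induction o using Ordinal.induction with
    | h o IH =>
      intro 𝒮 hrank θ' M γ N hθ' hM hγ hγM hSN
      by_cases hSemp : 𝒮 = ∅
      · subst hSemp
        obtain ⟨G, hG1, hG2, hG3⟩ := greedy_lemma w hwnn hwdiv hw0 N M γ hM hγ
        exact ⟨G, hG1, hG2, hG3, by simp⟩
      · obtain ⟨S₀, hS₀⟩ := Finset.nonempty_iff_ne_empty.2 hSemp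
        have hopos : 0 < o := lt_of_le_of_lt zero_le (hrank S₀ hS₀)
        set L : ℕ := ⌈(4:ℝ)/θ'⌉₊ + 1 with hLdef
        have hL4 : (4:ℝ)/θ' ≤ L := le_trans (Nat.le_ceil _) (by exact_mod_cast Nat.le_succ _)
        have hLpos : 0 < (L:ℝ) := by exact_mod_cast Nat.succ_pos _
        set m : ℝ := M / L with hmdef
        have hmpos : 0 < m := div_pos hM hLpos
        set γ₁ : ℝ := min (γ / L) (θ'/2 * m / 8) with hγ₁def
        have hγ₁pos : 0 < γ₁ := lt_min (div_pos hγ hLpos) (by positivity)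
        have layers : ∀ t : ℕ, ∃ (Gs : ℕ → Finset ℕ) (b : ℕ),
            N ≤ b ∧
            (∀ s : ℕ, ∀ i ∈ Gs s, N ≤ i ∧ i < b) ∧
            (∀ s : ℕ, t ≤ s → Gs s = ∅) ∧
            (∀ s s' : ℕ, s < s' → ∀ i ∈ Gs s, ∀ j ∈ Gs s', i < j) ∧
            (∀ s : ℕ, s < t → m ≤ ∑ i ∈ Gs s, w i ∧ ∑ i ∈ Gs s, w i ≤ m + γ₁) ∧
            (∀ s : ℕ, ∀ S ∈ 𝒮, ∀ i : ℕ, (∃ s', s' < s ∧ i ∈ Gs s') → insert i S ∈ 𝓕 →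
              ∀ F : Finset ℕ, F ⊆ Gs s → ((insert i S) ∪ F) ∈ 𝓕 →
                ∑ j ∈ F, w j ≤ θ'/2 * ∑ j ∈ Gs s, w j) := by
          intro t
          induction t with
          | zero =>
            refine ⟨fun _ => ∅, N, le_refl N, by simp, fun _ _ => rfl, by simp, by simp, ?_⟩
            intro s S hS i hex h1 F hF h2
            rw [Finset.subset_empty] at hF
            subst hF; simp
          | succ t ihs =>
            obtain ⟨Gs, b, hb, hbound, hemp, hord, hmass, hcert⟩ := ihs
            set U : Finset ℕ := (Finset.range t).biUnion Gs with hUdef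
            set 𝒮t : Finset (Finset ℕ) :=
              𝒮.biUnion (fun S =>
                (U.filter (fun i => insert i S ∈ 𝓕)).image (fun i => insert i S)) with h𝒮tdef
            have h𝒮tmem : ∀ S' ∈ 𝒮t, ∃ S ∈ 𝒮, ∃ i ∈ U, insert i S ∈ 𝓕 ∧ S' = insert i S := by
              intro S' hS'
              rw [h𝒮tdef, Finset.mem_biUnion] at hS'
              obtain ⟨S, hS, hS'2⟩ := hS'
              rw [Finset.mem_image] at hS'2
              obtain ⟨i, hi, rfl⟩ := hS'2
              rw [Finset.mem_filter] at hi
              exact ⟨S, hS, i, hi.1, hi.2, rfl⟩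
            have hUprop : ∀ i ∈ U, N ≤ i ∧ i < b := by
              intro i hi
              rw [hUdef, Finset.mem_biUnion] at hi
              obtain ⟨s, _, his⟩ := hi
              exact hbound s i his
            have hrel : ∀ S' ∈ 𝒮t, ∃ S ∈ 𝒮, r S' S := by
              intro S' hS'
              obtain ⟨S, hS, i, hiU, hins, rfl⟩ := h𝒮tmem _ hS'
              refine ⟨S, hS, hins, i, ?_, rfl⟩
              intro j hj
              exact lt_of_lt_of_le (hSN S hS j hj) (hUprop i hiU).1
            set o₁ : Ordinal := 𝒮t.sup (fun S' => Order.succ ((hwf.apply S').rank)) with ho₁def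
            have ho₁ : o₁ < o := by
              rcases Finset.eq_empty_or_nonempty 𝒮t with hemp𝒮 | hne𝒮
              · rw [ho₁def, hemp𝒮]
                simpa using hopos
              · rw [ho₁def, Finset.sup_lt_iff (by simpa using hopos)]
                intro S' hS'
                obtain ⟨S, hS, hrS⟩ := hrel S' hS'
                exact lt_of_le_of_lt (Order.succ_le_of_lt (Acc.rank_lt_of_rel (hwf.apply S) hrS)) (hrank S hS)
            have hranks : ∀ S' ∈ 𝒮t, (hwf.apply S').rank < o₁ := by
              intro S' hS'
              exact lt_of_lt_of_le (Order.lt_succ _) (Finset.le_sup (f := fun S' => Order.succ ((hwf.apply S').rank)) hS')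
            have hmaxes : ∀ S' ∈ 𝒮t, ∀ j ∈ S', j < b := by
              intro S' hS' j hj
              obtain ⟨S, hS, i, hiU, hins, rfl⟩ := h𝒮tmem _ hS'
              rcases Finset.mem_insert.1 hj with rfl | hjS
              · exact (hUprop j hiU).2
              · exact lt_of_lt_of_le (hSN S hS j hjS) hb
            obtain ⟨Gt, hGt1, hGt2, hGt3, hGt4⟩ :=
              IH o₁ ho₁ 𝒮t hranks (θ'/2) m γ₁ b (half_pos hθ') hmpos hγ₁pos
                (min_le_right _ _) hmaxes
            have hGtne : Gt.Nonempty := by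
              rw [Finset.nonempty_iff_ne_empty]
              intro hemp'
              rw [hemp', Finset.sum_empty] at hGt2
              linarith
            set b' : ℕ := Gt.max' hGtne + 1 with hb'def
            have hbmax : b ≤ Gt.max' hGtne := hGt1 _ (Gt.max'_mem hGtne)
            set Gs2 : ℕ → Finset ℕ := fun s => if s = t then Gt else Gs s with hGs2def
            have hGs2t : Gs2 t = Gt := by simp [hGs2def]
            have hGs2ne : ∀ s, s ≠ t → Gs2 s = Gs s := by
              intro s hs
              simp [hGs2def, hs]
            refine ⟨Gs2, b', le_trans hb (by omega), ?_, ?_, ?_, ?_, ?_⟩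
            · intro s i hi
              by_cases hs : s = t
              · subst hs
                rw [hGs2t] at hi
                have h1 : b ≤ i := hGt1 i hi
                have h2 : i ≤ Gt.max' hGtne := Finset.le_max' _ i hi
                exact ⟨le_trans hb h1, by omega⟩
              · rw [hGs2ne s hs] at hi
                have := hbound s i hi
                exact ⟨this.1, by omega⟩
            · intro s hs
              have hs' : s ≠ t := by omega
              rw [hGs2ne s hs']
              exact hemp s (by omega)
            · intro s s' hss' i hi j hj
              by_cases hs : s = t
              · subst hs
                have hs'' : s' ≠ s := by omega
                rw [hGs2ne s' hs'', hemp s' (by omega)] at hj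
                exact absurd hj (Finset.notMem_empty j)
              · rw [hGs2ne s hs] at hi
                by_cases hs' : s' = t
                · subst hs'
                  rw [hGs2t] at hj
                  have : i < b := (hbound s i hi).2
                  exact lt_of_lt_of_le this (hGt1 j hj)
                · rw [hGs2ne s' hs'] at hj
                  exact hord s s' hss' i hi j hj
            · intro s hs
              by_cases hst : s = t
              · subst hst
                rw [hGs2t]
                exact ⟨hGt2, hGt3⟩
              · rw [hGs2ne s hst]
                exact hmass s (by omega)
            · intro s S hS i hex hins F hF h2
              by_cases hst : s = t
              · subst hst
                rw [hGs2t] at hF ⊢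
                obtain ⟨s', hs', hi⟩ := hex
                rw [hGs2ne s' (by omega)] at hi
                have hiU : i ∈ U := by
                  rw [hUdef, Finset.mem_biUnion]
                  exact ⟨s', Finset.mem_range.2 hs', hi⟩
                have hmem𝒮t : insert i S ∈ 𝒮t := by
                  rw [h𝒮tdef, Finset.mem_biUnion]
                  refine ⟨S, hS, ?_⟩
                  rw [Finset.mem_image]
                  exact ⟨i, Finset.mem_filter.2 ⟨hiU, hins⟩, rfl⟩
                exact hGt4 _ hmem𝒮t F hF h2
              · rw [hGs2ne s hst] at hF ⊢
                by_cases hts : t ≤ s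
                · have hGse : Gs s = ∅ := hemp s (by omega)
                  rw [hGse] at hF
                  rw [Finset.subset_empty] at hF
                  subst hF
                  rw [hGse]
                  simp
                · obtain ⟨s', hs', hi⟩ := hex
                  have hs't : s' ≠ t := by omega
                  rw [hGs2ne s' hs't] at hi
                  exact hcert s S hS i ⟨s', hs', hi⟩ hins F hF h2
        -- use layers at L
        obtain ⟨Gs, b, hb, hbound, hemp, hord, hmass, hcert⟩ := layers L
        set G : Finset ℕ := (Finset.range L).biUnion Gs with hGdef
        have hdisj : Set.PairwiseDisjoint ↑(Finset.range L) Gs := by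
          intro s hs s' hs' hne
          rcases lt_or_gt_of_ne hne with h | h
          · exact Finset.disjoint_left.2 (fun {i} hi hi' => absurd (hord s s' h i hi i hi') (lt_irrefl _))
          · exact Finset.disjoint_left.2 (fun {i} hi hi' => absurd (hord s' s h i hi' i hi) (lt_irrefl _))
        have hGsum : ∑ i ∈ G, w i = ∑ s ∈ Finset.range L, ∑ i ∈ Gs s, w i :=
          Finset.sum_biUnion hdisj
        have hLm : m * (L:ℝ) = M := by
          rw [hmdef]
          exact div_mul_cancel₀ M (ne_of_gt hLpos)
        have hMlow : M ≤ ∑ i ∈ G, w i := by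
          rw [hGsum]
          calc M = (L : ℝ) * m := by rw [← hLm]; ring
          _ = ∑ _s ∈ Finset.range L, m := by rw [Finset.sum_const, Finset.card_range, nsmul_eq_mul]
          _ ≤ ∑ s ∈ Finset.range L, ∑ i ∈ Gs s, w i :=
              Finset.sum_le_sum (fun s hs => (hmass s (Finset.mem_range.1 hs)).1)
        have hMup : ∑ i ∈ G, w i ≤ M + γ := by
          rw [hGsum]
          calc ∑ s ∈ Finset.range L, ∑ i ∈ Gs s, w i
              ≤ ∑ _s ∈ Finset.range L, (m + γ₁) :=
              Finset.sum_le_sum (fun s hs => (hmass s (Finset.mem_range.1 hs)).2)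
          _ = (L : ℝ) * (m + γ₁) := by rw [Finset.sum_const, Finset.card_range, nsmul_eq_mul]
          _ = (L : ℝ) * m + (L:ℝ) * γ₁ := by ring
          _ ≤ M + γ := by
              have h1 : (L:ℝ) * m = M := by rw [← hLm]; ring
              have h2 : (L:ℝ) * γ₁ ≤ γ := by
                have := min_le_left (γ / L) (θ'/2 * m / 8)
                calc (L:ℝ) * γ₁ ≤ (L:ℝ) * (γ / L) := by
                      apply mul_le_mul_of_nonneg_left _ (le_of_lt hLpos)
                      rw [hγ₁def]; exact this
                _ = γ := by field_simp
              linarith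
        refine ⟨G, ?_, hMlow, hMup, ?_⟩
        · intro i hi
          rw [hGdef, Finset.mem_biUnion] at hi
          obtain ⟨s, _, his⟩ := hi
          exact (hbound s i his).1
        · intro S hS F hFsub hSF
          rcases F.eq_empty_or_nonempty with rfl | hFne
          · rw [Finset.sum_empty]
            have : (0:ℝ) ≤ ∑ i ∈ G, w i := Finset.sum_nonneg (fun i _ => hwnn i)
            positivity
          · have hi₀F : F.min' hFne ∈ F := F.min'_mem hFne
            set i₀ := F.min' hFne with hi₀def
            have hi₀G : i₀ ∈ G := hFsub hi₀F
            rw [hGdef, Finset.mem_biUnion] at hi₀G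
            obtain ⟨t₀, ht₀L, hi₀t₀⟩ := hi₀G
            have hFdec : F = (Finset.range L).biUnion (fun s => F ∩ Gs s) := by
              ext j
              simp only [Finset.mem_biUnion, Finset.mem_inter]
              constructor
              · intro hj
                have hjG := hFsub hj
                rw [hGdef, Finset.mem_biUnion] at hjG
                obtain ⟨s, hs, hjs⟩ := hjG
                exact ⟨s, hs, hj, hjs⟩
              · rintro ⟨s, _, hj, _⟩
                exact hj
            have hFsum : ∑ i ∈ F, w i = ∑ s ∈ Finset.range L, ∑ i ∈ F ∩ Gs s, w i := by
              conv_lhs => rw [hFdec]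
              apply Finset.sum_biUnion
              intro s hs s' hs' hne
              exact Finset.disjoint_of_subset_left (Finset.inter_subset_right)
                (Finset.disjoint_of_subset_right (Finset.inter_subset_right) (hdisj hs hs' hne))
            have hterm : ∀ s ∈ Finset.range L, s ≠ t₀ →
                ∑ i ∈ F ∩ Gs s, w i ≤ θ'/2 * ∑ i ∈ Gs s, w i := by
              intro s hs hne
              rcases lt_or_gt_of_ne hne with hlt | hgt
              · have : F ∩ Gs s = ∅ := by
                  rw [Finset.eq_empty_iff_forall_notMem]
                  intro j hj
                  rw [Finset.mem_inter] at hj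
                  have hji₀ : j < i₀ := hord s t₀ hlt j hj.2 i₀ hi₀t₀
                  have : i₀ ≤ j := Finset.min'_le F j hj.1
                  omega
                rw [this, Finset.sum_empty]
                have : (0:ℝ) ≤ ∑ i ∈ Gs s, w i := Finset.sum_nonneg (fun i _ => hwnn i)
                positivity
              · apply hcert s S hS i₀ ⟨t₀, hgt, hi₀t₀⟩
                · apply hered (S ∪ F)
                  · intro j hj
                    rcases Finset.mem_insert.1 hj with rfl | hjS
                    · exact Finset.mem_union_right _ hi₀F
                    · exact Finset.mem_union_left _ hjS
                  · exact hSF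
                · exact Finset.inter_subset_right
                · apply hered (S ∪ F)
                  · intro j hj
                    rcases Finset.mem_union.1 hj with hj1 | hj2
                    · rcases Finset.mem_insert.1 hj1 with rfl | hjS
                      · exact Finset.mem_union_right _ hi₀F
                      · exact Finset.mem_union_left _ hjS
                    · exact Finset.mem_union_right _ (Finset.mem_inter.1 hj2).1
                  · exact hSF
            have hsplit : ∑ i ∈ F, w i = ∑ i ∈ F ∩ Gs t₀, w i +
                ∑ s ∈ (Finset.range L).erase t₀, ∑ i ∈ F ∩ Gs s, w i := by
              rw [hFsum, ← Finset.add_sum_erase _ _ ht₀L]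
            have hhead : ∑ i ∈ F ∩ Gs t₀, w i ≤ m + γ₁ := by
              calc ∑ i ∈ F ∩ Gs t₀, w i ≤ ∑ i ∈ Gs t₀, w i :=
                    Finset.sum_le_sum_of_subset_of_nonneg (Finset.inter_subset_right)
                      (fun i _ _ => hwnn i)
              _ ≤ m + γ₁ := (hmass t₀ (Finset.mem_range.1 ht₀L)).2
            have htail : ∑ s ∈ (Finset.range L).erase t₀, ∑ i ∈ F ∩ Gs s, w i ≤
                θ'/2 * ∑ i ∈ G, w i := by
              calc ∑ s ∈ (Finset.range L).erase t₀, ∑ i ∈ F ∩ Gs s, w i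
                  ≤ ∑ s ∈ (Finset.range L).erase t₀, θ'/2 * ∑ i ∈ Gs s, w i := by
                    apply Finset.sum_le_sum
                    intro s hs
                    exact hterm s (Finset.mem_of_mem_erase hs) (Finset.ne_of_mem_erase hs)
              _ ≤ ∑ s ∈ Finset.range L, θ'/2 * ∑ i ∈ Gs s, w i := by
                    apply Finset.sum_le_sum_of_subset_of_nonneg (Finset.erase_subset _ _)
                    intro s _ _
                    have : (0:ℝ) ≤ ∑ i ∈ Gs s, w i := Finset.sum_nonneg (fun i _ => hwnn i)
                    positivity
              _ = θ'/2 * ∑ s ∈ Finset.range L, ∑ i ∈ Gs s, w i := by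
                    rw [Finset.mul_sum]
              _ = θ'/2 * ∑ i ∈ G, w i := by rw [hGsum]
            have hm4 : m ≤ θ'/4 * M := by
              rw [hmdef, div_le_iff₀ hLpos]
              have h44 : (4:ℝ)/θ' * M ≤ (L:ℝ) * M :=
                mul_le_mul_of_nonneg_right hL4 (le_of_lt hM)
              calc M = θ'/4 * ((4:ℝ)/θ' * M) := by field_simp
              _ ≤ θ'/4 * ((L:ℝ) * M) := by
                    apply mul_le_mul_of_nonneg_left h44
                    positivity
              _ = θ'/4 * M * L := by ring
            have hγ₁γ : γ₁ ≤ γ := by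
              calc γ₁ ≤ γ / L := min_le_left _ _
              _ ≤ γ := by
                    rw [div_le_iff₀ hLpos]
                    nlinarith [hγ, hLpos, (by exact_mod_cast Nat.one_le_iff_ne_zero.2 (Nat.succ_ne_zero _) : (1:ℝ) ≤ (L:ℝ))]
            have hγθ : γ ≤ θ'/8 * M := by linarith [hγM]
            have hMG : M ≤ ∑ i ∈ G, w i := hMlow
            have hGpos : 0 < ∑ i ∈ G, w i := lt_of_lt_of_le hM hMG
            calc ∑ i ∈ F, w i ≤ (m + γ₁) + θ'/2 * ∑ i ∈ G, w i := by
                  rw [hsplit]; linarith [hhead, htail]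
            _ ≤ θ'/4 * M + θ'/8 * M + θ'/2 * ∑ i ∈ G, w i := by linarith
            _ ≤ θ'/4 * (∑ i ∈ G, w i) + θ'/8 * (∑ i ∈ G, w i) + θ'/2 * ∑ i ∈ G, w i := by
                  have h1 : θ'/4 * M ≤ θ'/4 * (∑ i ∈ G, w i) :=
                    mul_le_mul_of_nonneg_left hMG (by positivity)
                  have h2 : θ'/8 * M ≤ θ'/8 * (∑ i ∈ G, w i) :=
                    mul_le_mul_of_nonneg_left hMG (by positivity)
                  linarith
            _ ≤ θ' * ∑ i ∈ G, w i := by nlinarith [hGpos]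
  -- apply cert
  obtain ⟨G, _, hG2, _, hG4⟩ := cert ((hwf.apply ∅).rank + 1) {∅}
    (by
      intro S hS
      rw [Finset.mem_singleton] at hS
      subst hS
      rw [Ordinal.add_one_eq_succ]
      exact Order.lt_succ _)
    θ 1 (θ/8) 0 hθ one_pos (by positivity) (by linarith) (by simp)
  refine ⟨G, lt_of_lt_of_le one_pos hG2, ?_⟩
  intro F hFsub hF
  have := hG4 ∅ (Finset.mem_singleton_self ∅) F hFsub (by rwa [Finset.empty_union])
  exact this

theorem stmt12
    (X : Type*) [NormedAddCommGroup X] [NormedSpace ℝ X] [CompleteSpace X]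
    (x : ℕ → X) (hbdd : ∃ C : ℝ, ∀ n, ‖x n‖ ≤ C)
    (hweak : ∀ f : X →L[ℝ] ℝ, Tendsto (fun n => f (x n)) atTop (𝓝 0))
    (w : ℕ → ℝ) (hwnonneg : ∀ n, 0 ≤ w n)
    (hwdiv : ¬ Summable w) (hw0 : Tendsto w atTop (𝓝 0)) :
    ∀ ε : ℝ, 0 < ε → ∃ G : Finset ℕ, 0 < ∑ j ∈ G, w j ∧
      ‖∑ i ∈ G, (w i / ∑ j ∈ G, w j) • x i‖ < ε := by
  classical
  obtain ⟨C, hC⟩ := hbdd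
  intro ε hε
  by_contra hcon
  push_neg at hcon
  -- hcon : ∀ G, 0 < ∑ → ε ≤ ‖..‖
  set D : ℝ := max C 1 with hDdef
  have hD : ∀ n, ‖x n‖ ≤ D := fun n => le_trans (hC n) (le_max_left _ _)
  have hDpos : (0:ℝ) < D := lt_of_lt_of_le one_pos (le_max_right _ _)
  have H' : ∀ G : Finset ℕ, ε * (∑ i ∈ G, w i) ≤ ‖∑ i ∈ G, w i • x i‖ := by
    intro G
    rcases eq_or_lt_of_le (Finset.sum_nonneg (fun i _ => hwnonneg i)) with h0 | hpos
    · rw [← h0, mul_zero]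
      exact norm_nonneg _
    · have hcon' := hcon G hpos
      set W : ℝ := ∑ i ∈ G, w i with hW
      have heq : ∑ i ∈ G, (w i / W) • x i = W⁻¹ • ∑ i ∈ G, w i • x i := by
        rw [Finset.smul_sum]
        apply Finset.sum_congr rfl
        intro i _
        rw [smul_smul, div_eq_inv_mul]
      rw [heq, norm_smul, norm_inv, Real.norm_eq_abs, abs_of_pos hpos] at hcon'
      calc ε * W ≤ (W⁻¹ * ‖∑ i ∈ G, w i • x i‖) * W := by nlinarith [hpos]
      _ = ‖∑ i ∈ G, w i • x i‖ := by field_simp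
  set 𝓕 : Set (Finset ℕ) :=
    {F : Finset ℕ | ∃ f : X →L[ℝ] ℝ, ‖f‖ ≤ 1 ∧ ∀ i ∈ F, ε/2 ≤ f (x i)} with h𝓕def
  have h0𝓕 : ∅ ∈ 𝓕 := ⟨0, by simp, by simp⟩
  have hered : ∀ F F' : Finset ℕ, F' ⊆ F → F ∈ 𝓕 → F' ∈ 𝓕 := by
    rintro F F' hsub ⟨f, hf1, hf2⟩
    exact ⟨f, hf1, fun i hi => hf2 i (hsub hi)⟩
  set δ : ℝ := ε / (2 * D) with hδdef
  have hδpos : 0 < δ := by positivity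
  have markov : ∀ G : Finset ℕ, 0 < ∑ i ∈ G, w i →
      ∃ F : Finset ℕ, F ⊆ G ∧ F ∈ 𝓕 ∧ δ * ∑ i ∈ G, w i ≤ ∑ i ∈ F, w i := by
    intro G hGpos
    set W : ℝ := ∑ i ∈ G, w i with hW
    have hSnorm : ε * W ≤ ‖∑ i ∈ G, w i • x i‖ := H' G
    have hSne : ∑ i ∈ G, w i • x i ≠ 0 := by
      intro h
      rw [h, norm_zero] at hSnorm
      nlinarith
    obtain ⟨g, hg1, hgS0⟩ := exists_dual_vector ℝ (∑ i ∈ G, w i • x i) (norm_ne_zero_iff.mpr hSne)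
    have hgS : g (∑ i ∈ G, w i • x i) = ‖∑ i ∈ G, w i • x i‖ := by
      simpa using hgS0
    have hgsum : ∑ i ∈ G, w i * g (x i) = ‖∑ i ∈ G, w i • x i‖ := by
      rw [← hgS, map_sum]
      apply Finset.sum_congr rfl
      intro i _
      rw [map_smul, smul_eq_mul]
    set F : Finset ℕ := G.filter (fun i => ε/2 ≤ g (x i)) with hFdef
    refine ⟨F, Finset.filter_subset _ _, ⟨g, le_of_eq hg1, fun i hi => (Finset.mem_filter.1 hi).2⟩, ?_⟩
    have hsplit : ∑ i ∈ F, w i * g (x i) + ∑ i ∈ G.filter (fun i => ¬ (ε/2 ≤ g (x i))), w i * g (x i)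
        = ∑ i ∈ G, w i * g (x i) := Finset.sum_filter_add_sum_filter_not G _ _
    have hbad : ∑ i ∈ G.filter (fun i => ¬ (ε/2 ≤ g (x i))), w i * g (x i) ≤ (ε/2) * W := by
      calc ∑ i ∈ G.filter (fun i => ¬ (ε/2 ≤ g (x i))), w i * g (x i)
          ≤ ∑ i ∈ G.filter (fun i => ¬ (ε/2 ≤ g (x i))), w i * (ε/2) := by
            apply Finset.sum_le_sum
            intro i hi
            have := (Finset.mem_filter.1 hi).2
            exact mul_le_mul_of_nonneg_left (le_of_lt (lt_of_not_ge this)) (hwnonneg i)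
      _ = (∑ i ∈ G.filter (fun i => ¬ (ε/2 ≤ g (x i))), w i) * (ε/2) := by
            rw [Finset.sum_mul]
      _ ≤ W * (ε/2) := by
            apply mul_le_mul_of_nonneg_right _ (by positivity)
            apply Finset.sum_le_sum_of_subset_of_nonneg (Finset.filter_subset _ _)
            intro i _ _
            exact hwnonneg i
      _ = (ε/2) * W := by ring
    have hgood : (ε/2) * W ≤ ∑ i ∈ F, w i * g (x i) := by
      nlinarith [hSnorm, hgsum, hsplit, hbad, hGpos]
    have hgoodup : ∑ i ∈ F, w i * g (x i) ≤ D * ∑ i ∈ F, w i := by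
      calc ∑ i ∈ F, w i * g (x i) ≤ ∑ i ∈ F, w i * D := by
            apply Finset.sum_le_sum
            intro i _
            apply mul_le_mul_of_nonneg_left _ (hwnonneg i)
            calc g (x i) ≤ ‖g (x i)‖ := le_abs_self _
            _ ≤ ‖g‖ * ‖x i‖ := g.le_opNorm _
            _ ≤ 1 * D := mul_le_mul (le_of_eq hg1) (hD i) (norm_nonneg _) zero_le_one
            _ = D := one_mul D
      _ = D * ∑ i ∈ F, w i := by rw [← Finset.sum_mul, mul_comm]
    have hfin : (ε/2) * W ≤ D * ∑ i ∈ F, w i := le_trans hgood hgoodup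
    have hδD : δ * D = ε / 2 := by
      rw [hδdef]
      field_simp
    have h2 : D * (δ * W) ≤ D * ∑ i ∈ F, w i := by
      calc D * (δ * W) = (δ * D) * W := by ring
      _ = (ε/2) * W := by rw [hδD]
      _ ≤ D * ∑ i ∈ F, w i := hfin
    exact le_of_mul_le_mul_left h2 hDpos
  by_cases hchain : ∃ φ : ℕ → ℕ, StrictMono φ ∧ ∀ k : ℕ, (Finset.range k).image φ ∈ 𝓕
  · obtain ⟨φ, hφmono, hφ𝓕⟩ := hchain
    have hwit : ∀ k : ℕ, ∃ f : X →L[ℝ] ℝ, ‖f‖ ≤ 1 ∧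
        ∀ i ∈ (Finset.range k).image φ, ε/2 ≤ f (x i) := fun k => hφ𝓕 k
    choose f hf1 hf2 using hwit
    set Y : Set X := Set.range (fun j => x (φ j)) with hYdef
    have hhull : ∀ z ∈ convexHull ℝ Y, ε/2 ≤ ‖z‖ := by
      intro z hz
      rw [convexHull_eq] at hz
      obtain ⟨ι, t, a, zf, ha0, ha1, hzY, hcm⟩ := hz
      have hn : ∀ i : {i // i ∈ t}, ∃ j : ℕ, x (φ j) = zf i.1 := by
        intro i
        exact hzY i.1 i.2
      choose n hn using hn
      set k : ℕ := (t.attach.sup fun i => n i) + 1 with hkdef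
      have hnk : ∀ i : {i // i ∈ t}, n i < k := by
        intro i
        have h2 : n i ≤ t.attach.sup fun i => n i :=
          Finset.le_sup (Finset.mem_attach t i)
        omega
      have hz' : z = ∑ i ∈ t, a i • zf i := by
        rw [← hcm, Finset.centerMass_eq_of_sum_1 _ _ ha1]
      have hfk : ε/2 ≤ f k z := by
        rw [hz', map_sum]
        have heach : ∀ i ∈ t, a i * (ε/2) ≤ f k (a i • zf i) := by
          intro i hi
          rw [map_smul, smul_eq_mul]
          apply mul_le_mul_of_nonneg_left _ (ha0 i hi)
          have hzi : zf i = x (φ (n ⟨i, hi⟩)) := (hn ⟨i, hi⟩).symm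
          rw [hzi]
          apply hf2 k
          rw [Finset.mem_image]
          exact ⟨n ⟨i, hi⟩, Finset.mem_range.2 (hnk ⟨i, hi⟩), rfl⟩
        calc ε/2 = ∑ i ∈ t, a i * (ε/2) := by
              rw [← Finset.sum_mul, ha1, one_mul]
        _ ≤ ∑ i ∈ t, f k (a i • zf i) := Finset.sum_le_sum heach
      calc ε/2 ≤ f k z := hfk
      _ ≤ ‖f k z‖ := le_abs_self _
      _ ≤ ‖f k‖ * ‖z‖ := (f k).le_opNorm _
      _ ≤ 1 * ‖z‖ := mul_le_mul_of_nonneg_right (hf1 k) (norm_nonneg _)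
      _ = ‖z‖ := one_mul _
    have hclos : ∀ z ∈ closure (convexHull ℝ Y), ε/2 ≤ ‖z‖ := by
      have hsub : convexHull ℝ Y ⊆ {z : X | ε/2 ≤ ‖z‖} := hhull
      have hcl : IsClosed {z : X | ε/2 ≤ ‖z‖} :=
        isClosed_le continuous_const continuous_norm
      intro z hz
      exact closure_minimal hsub hcl hz
    have h0not : (0:X) ∉ closure (convexHull ℝ Y) := by
      intro h
      have := hclos 0 h
      rw [norm_zero] at this
      linarith
    obtain ⟨g, c, hgc, hsep⟩ := geometric_hahn_banach_point_closed
      ((convex_convexHull ℝ Y).closure) isClosed_closure h0not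
    have hc0 : 0 < c := by simpa using hgc
    have hvals : ∀ j : ℕ, c < g (x (φ j)) := by
      intro j
      exact hsep _ (subset_closure (subset_convexHull ℝ Y ⟨j, rfl⟩))
    have htend : Tendsto (fun j => g (x (φ j))) atTop (𝓝 0) :=
      (hweak g).comp hφmono.tendsto_atTop
    have hc0' : c ≤ 0 := ge_of_tendsto htend (Eventually.of_forall (fun j => le_of_lt (hvals j)))
    linarith
  · obtain ⟨G, hGpos, hGcert⟩ :=
      mainCombo w hwnonneg hwdiv hw0 𝓕 h0𝓕 hered hchain (δ/2) (by positivity)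
    obtain ⟨F, hFG, hF𝓕, hFmass⟩ := markov G hGpos
    have hfinal := hGcert F hFG hF𝓕
    nlinarith [hGpos, hδpos]
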